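/- arXiv:2304.04418 — 3 statements merged into one kernel-verified Lean document; each statement's English description precedes it below -/
import Mathlib

section
/- Let s ∈ (1/2, 1) and h > 0, and let S = (0,h) × (0,h). There exists a constant C depending only on s such that for every measurable u : ℝ² → ℝ with u ∈ L²(S) and |u|_{s,S} < ∞, one has ∫_0^h ∫_0^h ∫_0^h (u(x, a) − u(x, b))² / |a − b|^{2s} da db dx ≤ C h |u|_{s,S}². -/
/-!
Fix `x` and `a ≠ b`, and put `d = |a - b|`. Every point `(y, c)` of the square
with `|x - y| < d` and `|c - b| < d` lies within `√5 d` of both `(x, a)` and `(x, b)`, so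
`(u(x,a) - u(x,b))² ≤ 2 · 5^(1+s) d^(2+2s) (k((x,a),(y,c)) + k((x,b),(y,c)))` for the Gagliardo
kernel `k`. These points form a rectangle of area at least `d²`; averaging over it bounds the
slice quotient at `(x, a, b)` by `2 · 5^(1+s)` times the sum of the Gagliardo densities
`∫_S k(p, ·)` at `(x, a)` and `(x, b)`. Integrating over `x, a, b`, the variable missing from each
term contributes the factor `h`.
-/
open MeasureTheory Set
open scoped ENNReal

/-- Euclidean distance on `ℝ × ℝ`. -/
noncomputable def euclDist (x y : ℝ × ℝ) : ℝ :=
  Real.sqrt ((x.1 - y.1) ^ 2 + (x.2 - y.2) ^ 2)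

/-- The squared Gagliardo seminorm `|v|_{s,D}²` of order `s` on `D ⊆ ℝ²`. -/
noncomputable def gagliardoSq (s : ℝ) (D : Set (ℝ × ℝ)) (v : ℝ × ℝ → ℝ) : ℝ≥0∞ :=
  ∫⁻ x in D, ∫⁻ y in D, ENNReal.ofReal ((v x - v y) ^ 2 / euclDist x y ^ (2 * (1 + s)))

noncomputable def gagliardoKernel (s : ℝ) (v : ℝ × ℝ → ℝ) (p q : ℝ × ℝ) : ℝ :=
  (v p - v q) ^ 2 / euclDist p q ^ (2 * (1 + s))

noncomputable def gagliardoDensity (s : ℝ) (D : Set (ℝ × ℝ)) (v : ℝ × ℝ → ℝ) (p : ℝ × ℝ) :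
    ℝ≥0∞ :=
  ∫⁻ q in D, ENNReal.ofReal (gagliardoKernel s v p q)

lemma gagliardoSq_eq_lintegral_gagliardoDensity (s : ℝ) (D : Set (ℝ × ℝ)) (v : ℝ × ℝ → ℝ) :
    gagliardoSq s D v = ∫⁻ p in D, gagliardoDensity s D v p :=
  rfl

lemma euclDist_rpow_two_mul (p q : ℝ × ℝ) (t : ℝ) :
    euclDist p q ^ (2 * t) = ((p.1 - q.1) ^ 2 + (p.2 - q.2) ^ 2) ^ t := by
  rw [euclDist, Real.sqrt_eq_rpow, ← Real.rpow_mul (by positivity)]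
  ring_nf

lemma gagliardoKernel_nonneg (s : ℝ) (v : ℝ × ℝ → ℝ) (p q : ℝ × ℝ) :
    0 ≤ gagliardoKernel s v p q :=
  div_nonneg (sq_nonneg _) (Real.rpow_nonneg (Real.sqrt_nonneg _) _)

lemma measurable_gagliardoKernel (s : ℝ) {v : ℝ × ℝ → ℝ} (hv : Measurable v) :
    Measurable fun z : (ℝ × ℝ) × (ℝ × ℝ) ↦ gagliardoKernel s v z.1 z.2 := by
  have hdist : Measurable fun z : (ℝ × ℝ) × (ℝ × ℝ) ↦ euclDist z.1 z.2 :=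
    (Real.continuous_sqrt.comp (by fun_prop)).measurable
  exact (((hv.comp measurable_fst).sub (hv.comp measurable_snd)).pow_const 2).div
    (hdist.pow_const _)

lemma measurable_gagliardoDensity (s : ℝ) (D : Set (ℝ × ℝ)) {v : ℝ × ℝ → ℝ}
    (hv : Measurable v) : Measurable (gagliardoDensity s D v) :=
  (measurable_gagliardoKernel s hv).ennreal_ofReal.lintegral_prod_right'

/-- At `p = q` the kernel is the junk value `0 / 0 = 0`, harmless since the left-hand side
vanishes as well. -/
lemma sq_sub_le_rpow_mul_gagliardoKernel {s R : ℝ} (hs : 0 ≤ 1 + s) (v : ℝ × ℝ → ℝ)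
    {p q : ℝ × ℝ} (hpq : (p.1 - q.1) ^ 2 + (p.2 - q.2) ^ 2 ≤ R) :
    (v p - v q) ^ 2 ≤ R ^ (1 + s) * gagliardoKernel s v p q := by
  set D := (p.1 - q.1) ^ 2 + (p.2 - q.2) ^ 2
  have hK : gagliardoKernel s v p q = (v p - v q) ^ 2 / D ^ (1 + s) := by
    rw [gagliardoKernel, euclDist_rpow_two_mul]
  rcases (show 0 ≤ D by positivity).eq_or_lt with hD | hD
  · have hpq : p = q := Prod.ext (by nlinarith [sq_nonneg (p.1 - q.1), sq_nonneg (p.2 - q.2)])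
      (by nlinarith [sq_nonneg (p.1 - q.1), sq_nonneg (p.2 - q.2)])
    simp [hpq, gagliardoKernel]
  · calc (v p - v q) ^ 2 = D ^ (1 + s) * gagliardoKernel s v p q := by
          rw [hK]; field_simp
      _ ≤ R ^ (1 + s) * gagliardoKernel s v p q := by
          gcongr
          exact gagliardoKernel_nonneg s v p q

lemma slice_quotient_le_gagliardoKernel {s : ℝ} (hs : 0 ≤ 1 + s) (u : ℝ × ℝ → ℝ)
    {x y a b c : ℝ} (hab : a ≠ b) (hxy : |x - y| ≤ |a - b|) (hcb : |c - b| ≤ |a - b|) :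
    (u (x, a) - u (x, b)) ^ 2 / |a - b| ^ (2 * s) ≤
      2 * 5 ^ (1 + s) * |a - b| ^ 2 *
        (gagliardoKernel s u (x, a) (y, c) + gagliardoKernel s u (x, b) (y, c)) := by
  set d := |a - b|
  have hd : 0 < d := abs_pos.2 (sub_ne_zero.2 hab)
  have hac : |a - c| ≤ 2 * d :=
    (abs_sub_le a b c).trans (by rw [abs_sub_comm b c]; linarith)
  have hxy2 : (x - y) ^ 2 ≤ d ^ 2 := by rw [← sq_abs]; gcongr
  have hac2 : (a - c) ^ 2 ≤ 4 * d ^ 2 := by rw [← sq_abs]; nlinarith [abs_nonneg (a - c)]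
  have hbc2 : (b - c) ^ 2 ≤ d ^ 2 := by rw [← sq_abs, abs_sub_comm]; gcongr
  have h1 := sq_sub_le_rpow_mul_gagliardoKernel (p := (x, a)) (q := (y, c)) (R := 5 * d ^ 2)
    hs u (by dsimp only; linarith)
  have h2 := sq_sub_le_rpow_mul_gagliardoKernel (p := (x, b)) (q := (y, c)) (R := 5 * d ^ 2)
    hs u (by dsimp only; nlinarith)
  have hR : (5 * d ^ 2) ^ (1 + s) = 5 ^ (1 + s) * d ^ 2 * d ^ (2 * s) := by
    rw [Real.mul_rpow (by norm_num) (by positivity), ← Real.rpow_natCast,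
      ← Real.rpow_mul hd.le, show ((2 : ℕ) : ℝ) * (1 + s) = 2 + 2 * s by push_cast; ring,
      Real.rpow_add hd, Real.rpow_two, mul_assoc]
    norm_cast
  rw [div_le_iff₀ (by positivity)]
  calc (u (x, a) - u (x, b)) ^ 2
      ≤ 2 * ((u (x, a) - u (y, c)) ^ 2 + (u (x, b) - u (y, c)) ^ 2) := by
        nlinarith [sq_nonneg (u (x, a) + u (x, b) - 2 * u (y, c))]
    _ ≤ 2 * ((5 * d ^ 2) ^ (1 + s) * gagliardoKernel s u (x, a) (y, c)
          + (5 * d ^ 2) ^ (1 + s) * gagliardoKernel s u (x, b) (y, c)) := by gcongr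
    _ = _ := by rw [hR]; ring

lemma ofReal_le_volume_Ioo_inter_ball {l r x d : ℝ} (hx : x ∈ Ioo l r) (hd₀ : 0 ≤ d)
    (hd : d ≤ r - l) : ENNReal.ofReal d ≤ volume (Ioo l r ∩ Metric.ball x d) := by
  rw [Real.ball_eq_Ioo, Ioo_inter_Ioo, Real.volume_Ioo]
  refine ENNReal.ofReal_le_ofReal ?_
  rcases min_cases r (x + d) with ⟨h₁, -⟩ | ⟨h₁, -⟩ <;>
    rcases max_cases l (x - d) with ⟨h₂, -⟩ | ⟨h₂, -⟩ <;> linarith [hx.1, hx.2]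

lemma slice_quotient_le_gagliardoDensity {s l r : ℝ} (hs : 0 ≤ 1 + s) {u : ℝ × ℝ → ℝ}
    (hu : Measurable u) {x a b : ℝ} (hx : x ∈ Ioo l r) (ha : a ∈ Ioo l r) (hb : b ∈ Ioo l r) :
    ENNReal.ofReal ((u (x, a) - u (x, b)) ^ 2 / |a - b| ^ (2 * s)) ≤
      ENNReal.ofReal (2 * 5 ^ (1 + s)) * gagliardoDensity s (Ioo l r ×ˢ Ioo l r) u (x, a)
        + ENNReal.ofReal (2 * 5 ^ (1 + s)) * gagliardoDensity s (Ioo l r ×ˢ Ioo l r) u (x, b) := by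
  rcases eq_or_ne a b with rfl | hab
  · simp
  set d := |a - b| with hd_def
  set I := Ioo l r
  set Q := ENNReal.ofReal ((u (x, a) - u (x, b)) ^ 2 / d ^ (2 * s))
  set K := ENNReal.ofReal (2 * 5 ^ (1 + s))
  set k : ℝ × ℝ → ℝ × ℝ → ℝ≥0∞ := fun p q ↦ ENNReal.ofReal (gagliardoKernel s u p q)
  have hk : ∀ p, Measurable (k p) := fun p ↦
    ((measurable_gagliardoKernel s hu).comp measurable_prodMk_left).ennreal_ofReal
  have hd : 0 < d := abs_pos.2 (sub_ne_zero.2 hab)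
  have hdI : d ≤ r - l := by
    rw [hd_def, abs_le]; constructor <;> linarith [ha.1, ha.2, hb.1, hb.2]
  set E := (I ∩ Metric.ball x d) ×ˢ (I ∩ Metric.ball b d)
  have hE : MeasurableSet E :=
    (measurableSet_Ioo.inter measurableSet_ball).prod (measurableSet_Ioo.inter measurableSet_ball)
  have hE_vol : ENNReal.ofReal d * ENNReal.ofReal d ≤ volume E := by
    rw [Measure.volume_eq_prod, Measure.prod_prod]
    gcongr <;> exact ofReal_le_volume_Ioo_inter_ball (by assumption) hd.le hdI
  have hE_bound :
      ∀ q ∈ E, Q ≤ ENNReal.ofReal d * ENNReal.ofReal d * K * (k (x, a) q + k (x, b) q) := by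
    rintro ⟨y, c⟩ ⟨⟨-, hy⟩, ⟨-, hc⟩⟩
    rw [Metric.mem_ball, Real.dist_eq, abs_sub_comm] at hy
    rw [Metric.mem_ball, Real.dist_eq] at hc
    rw [← ENNReal.ofReal_mul hd.le, ← ENNReal.ofReal_mul (by positivity),
      ← ENNReal.ofReal_add (gagliardoKernel_nonneg _ _ _ _) (gagliardoKernel_nonneg _ _ _ _),
      ← ENNReal.ofReal_mul (by positivity)]
    exact ENNReal.ofReal_le_ofReal
      ((slice_quotient_le_gagliardoKernel hs u hab hy.le hc.le).trans_eq (by ring))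
  have hd_ne : ENNReal.ofReal d * ENNReal.ofReal d ≠ 0 := by positivity
  refine (ENNReal.mul_le_mul_iff_left hd_ne (by finiteness)).1 ?_
  calc Q * (ENNReal.ofReal d * ENNReal.ofReal d) ≤ Q * volume E := by gcongr
    _ = ∫⁻ _ in E, Q := (setLIntegral_const E Q).symm
    _ ≤ ∫⁻ q in E, ENNReal.ofReal d * ENNReal.ofReal d * K * (k (x, a) q + k (x, b) q) :=
        setLIntegral_mono' hE hE_bound
    _ ≤ ∫⁻ q in I ×ˢ I, ENNReal.ofReal d * ENNReal.ofReal d * K * (k (x, a) q + k (x, b) q) :=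
        lintegral_mono_set (prod_mono inter_subset_left inter_subset_left)
    _ = _ := by
        rw [lintegral_const_mul' _ _ (by finiteness), lintegral_add_left (hk _)]
        simp only [gagliardoDensity, k]
        ring

lemma lintegral_lintegral_lintegral_add_eq_two_mul {α β : Type*} [MeasurableSpace α]
    [MeasurableSpace β] {μ : Measure α} {ν : Measure β} [SFinite ν] {F : α × β → ℝ≥0∞}
    (hF : Measurable F) :
    ∫⁻ x, ∫⁻ a, ∫⁻ b, (F (x, a) + F (x, b)) ∂ν ∂ν ∂μ = 2 * ν univ * ∫⁻ p, F p ∂μ.prod ν := by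
  have hslice (x : α) :
      ∫⁻ a, ∫⁻ b, (F (x, a) + F (x, b)) ∂ν ∂ν = 2 * ν univ * ∫⁻ a, F (x, a) ∂ν := by
    simp only [lintegral_add_left measurable_const, lintegral_const]
    have hFx : Measurable fun a ↦ F (x, a) := hF.comp measurable_prodMk_left
    rw [lintegral_add_right _ measurable_const, lintegral_mul_const _ hFx, lintegral_const]
    ring
  rw [lintegral_congr hslice, lintegral_const_mul _ hF.lintegral_prod_right',
    lintegral_prod _ hF.aemeasurable]

/-- Fractional slicing (Fubini-type trace) inequality: for `s ∈ (1/2,1)`, `h > 0`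
and `S = (0,h)²`, there is `C = C(s)` such that for every measurable `u ∈ L²(S)`
with finite Gagliardo seminorm,
`∫_0^h ∫_0^h ∫_0^h (u(x,a) − u(x,b))²/|a−b|^{2s} da db dx ≤ C h |u|_{s,S}²`. -/
theorem fractional_slicing_inequality (s : ℝ) (hs : s ∈ Set.Ioo (1/2 : ℝ) 1) :
    ∃ C : ℝ, 0 < C ∧ ∀ h : ℝ, 0 < h →
      ∀ u : ℝ × ℝ → ℝ, Measurable u →
        MemLp u 2 (volume.restrict (Ioo (0 : ℝ) h ×ˢ Ioo (0 : ℝ) h)) →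
        gagliardoSq s (Ioo (0 : ℝ) h ×ˢ Ioo (0 : ℝ) h) u < ⊤ →
        (∫⁻ x in Ioo (0 : ℝ) h, ∫⁻ a in Ioo (0 : ℝ) h, ∫⁻ b in Ioo (0 : ℝ) h,
            ENNReal.ofReal ((u (x, a) - u (x, b)) ^ 2 / |a - b| ^ (2 * s))) ≤
          ENNReal.ofReal (C * h) *
            gagliardoSq s (Ioo (0 : ℝ) h ×ˢ Ioo (0 : ℝ) h) u := by
  have hs₀ : 0 ≤ 1 + s := by linarith [hs.1]
  refine ⟨4 * 5 ^ (1 + s), by positivity, fun h hh u hu _ _ ↦ ?_⟩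
  set I := Ioo (0 : ℝ) h
  set K := ENNReal.ofReal (2 * 5 ^ (1 + s))
  set F := fun p ↦ K * gagliardoDensity s (I ×ˢ I) u p
  have hF : Measurable F := (measurable_gagliardoDensity s _ hu).const_mul K
  calc (∫⁻ x in I, ∫⁻ a in I, ∫⁻ b in I,
          ENNReal.ofReal ((u (x, a) - u (x, b)) ^ 2 / |a - b| ^ (2 * s)))
      ≤ ∫⁻ x in I, ∫⁻ a in I, ∫⁻ b in I, (F (x, a) + F (x, b)) := by
        refine setLIntegral_mono' measurableSet_Ioo fun x hx ↦ ?_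
        refine setLIntegral_mono' measurableSet_Ioo fun a ha ↦ ?_
        exact setLIntegral_mono' measurableSet_Ioo fun b hb ↦
          slice_quotient_le_gagliardoDensity hs₀ hu hx ha hb
    _ = 2 * volume I * ∫⁻ p in I ×ˢ I, F p := by
        rw [lintegral_lintegral_lintegral_add_eq_two_mul hF, Measure.restrict_apply_univ,
          Measure.volume_eq_prod, Measure.prod_restrict]
    _ = ENNReal.ofReal (4 * 5 ^ (1 + s) * h) * gagliardoSq s (I ×ˢ I) u := by
        rw [lintegral_const_mul _ (measurable_gagliardoDensity s _ hu), Real.volume_Ioo, sub_zero,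
          ← gagliardoSq_eq_lintegral_gagliardoDensity,
          show 4 * 5 ^ (1 + s) * h = 2 * h * (2 * 5 ^ (1 + s)) by ring,
          ENNReal.ofReal_mul (by positivity), ENNReal.ofReal_mul (by norm_num),
          ENNReal.ofReal_ofNat]
        ring
end

section
/- Let κ₀ ∈ ℝ and κ₁ > 0, let θ ∈ (1/2, 1), let h > 0 and let l satisfy τ(θ) h ≤ l ≤ h. Let S = (0,h) × (0,h), and let K ⊆ (0,h) × (0,l) be a measurable set with |K| ≥ h l / c for some c ≥ 1. Then there exists a constant C depending only on θ and c such that for every measurable u : ℝ² → ℝ with u ∈ L²(S) and |u|_{θ,S} < ∞, one has ∫_S (u(x) − ū_K)² dx ≤ C (1 + ϱ(κ₀,κ₁)²) h^{2θ} |u|_{θ,S}², where ū_K is the mean value of u over K. -/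
/-!
Jensen's inequality gives `(v - ū_B)² ≤ |B|⁻¹ ∫_B (v - u)²`; if `B` contains a square of side `s`
and has diameter `≤ a s`, the Gagliardo kernel turns this into a bound by `a⁴ s^{2θ}` times the
local energy. On the square `S` this controls `u - ū_S`. Since `ū_K` only sees the thin rectangle
`R = (0,h) × (0,l)`, one also needs `∫_R (u - ū_S)² ≲ h l^{2θ-1} |u|²`: compare `u x` with the
mean over a box of side `l` above `x`, then climb through boxes of sides `2ᵏ l` up to `S`.
Consecutive means differ by `≲ (2ᵏ l)^{θ-1} |u|`, a geometric series dominated by its first term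
because `θ < 1`. Altogether `∫_S (u - ū_K)² ≲ (h/l)^{2-2θ} h^{2θ} |u|²`, and shape regularity
`l ≥ τ(θ) h` bounds `(h/l)^{2-2θ}` by `τ(θ)^{-(2-2θ)} ≤ ϱ(κ₀,κ₁)²`.
-/

open MeasureTheory Set
open scoped ENNReal

/-- The mean value of `v` over `D`. -/
noncomputable def meanValue (D : Set (ℝ × ℝ)) (v : ℝ × ℝ → ℝ) : ℝ :=
  (∫ x in D, v x) / (volume D).toReal

/-- `r(θ) = 1 − κ₁(θ − 1/2)(θ − 1)`. -/
noncomputable def rfun (κ₁ θ : ℝ) : ℝ := 1 - κ₁ * (θ - 1/2) * (θ - 1)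

/-- `τ(θ) = exp(1 + κ₀ − r(θ)/(2(1 − θ)))`. -/
noncomputable def tau (κ₀ κ₁ θ : ℝ) : ℝ :=
  Real.exp (1 + κ₀ - rfun κ₁ θ / (2 * (1 - θ)))

/-- The constant `ϱ(κ₀,κ₁)` from formula (5.3) of the paper. -/
noncomputable def varrho (κ₀ κ₁ : ℝ) : ℝ :=
  if (κ₀ + 1) / κ₁ > 1/4 then Real.exp (1/2)
  else if (κ₀ + 1) / κ₁ < -(1/4) then Real.exp (-κ₀ / 2)
  else Real.exp ((16 * κ₀ ^ 2 - 8 * κ₀ * (κ₁ - 4) + (4 + κ₁) ^ 2) / (32 * κ₁))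

theorem setAverage_const_sub_eq {B : Set (ℝ × ℝ)} {u : ℝ × ℝ → ℝ} (hB₀ : volume B ≠ 0)
    (hB : volume B ≠ ∞) (hu : IntegrableOn u B) (v : ℝ) :
    ⨍ y in B, (v - u y) = v - meanValue B u := by
  have : IsFiniteMeasure (volume.restrict B) := isFiniteMeasure_restrict.2 hB
  have : volume.real B ≠ 0 := (ENNReal.toReal_pos hB₀ hB).ne'
  rw [setAverage_eq, integral_sub (integrable_const v) hu, setIntegral_const, meanValue,
    smul_eq_mul, smul_eq_mul, ← measureReal_def]
  field_simp

theorem sq_sub_meanValue_le {B : Set (ℝ × ℝ)} {u : ℝ × ℝ → ℝ} (hB₀ : volume B ≠ 0)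
    (hB : volume B ≠ ∞) (hu : MemLp u 2 (volume.restrict B)) (v : ℝ) :
    ENNReal.ofReal ((v - meanValue B u) ^ 2)
      ≤ (volume B)⁻¹ * ∫⁻ y in B, ENNReal.ofReal ((v - u y) ^ 2) := by
  have : IsFiniteMeasure (volume.restrict B) := isFiniteMeasure_restrict.2 hB
  have hv : MemLp (fun y => v - u y) 2 (volume.restrict B) := (memLp_const v).sub hu
  have jensen : (v - meanValue B u) ^ 2 ≤ ⨍ y in B, (v - u y) ^ 2 := by
    have := even_two.convexOn_pow.map_set_average_le (continuous_pow 2).continuousOn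
      isClosed_univ hB₀ hB (ae_of_all _ fun _ => mem_univ _) (hv.integrable one_le_two)
      hv.integrable_sq
    rwa [setAverage_const_sub_eq hB₀ hB (hu.integrable one_le_two)] at this
  calc ENNReal.ofReal ((v - meanValue B u) ^ 2)
      ≤ ENNReal.ofReal (⨍ y in B, (v - u y) ^ 2) := ENNReal.ofReal_le_ofReal jensen
    _ = (volume B)⁻¹ * ∫⁻ y in B, ENNReal.ofReal ((v - u y) ^ 2) := by
      rw [setAverage_eq, smul_eq_mul, ENNReal.ofReal_mul (by positivity), measureReal_def,
        ENNReal.ofReal_inv_of_pos (ENNReal.toReal_pos hB₀ hB), ENNReal.ofReal_toReal hB,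
        ofReal_integral_eq_lintegral_ofReal hv.integrable_sq (ae_of_all _ fun _ => sq_nonneg _)]

theorem ofReal_sq_sub_le (a b c : ℝ) :
    ENNReal.ofReal ((a - c) ^ 2)
      ≤ 2 * ENNReal.ofReal ((a - b) ^ 2) + 2 * ENNReal.ofReal ((b - c) ^ 2) := by
  rw [← ENNReal.ofReal_ofNat, ← ENNReal.ofReal_mul zero_le_two, ← ENNReal.ofReal_mul zero_le_two,
    ← ENNReal.ofReal_add (by positivity) (by positivity)]
  refine ENNReal.ofReal_le_ofReal ?_
  linarith [add_sq_le (a := a - b) (b := b - c), show a - c = (a - b) + (b - c) by ring]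

theorem two_mul_ofReal_mul_add_eq {a b d : ℝ} (ha : 0 ≤ a) (hb : 0 ≤ b) (hd : 0 ≤ d)
    (E : ℝ≥0∞) :
    2 * (ENNReal.ofReal a * E) + 2 * (ENNReal.ofReal b * E) * ENNReal.ofReal d
      = ENNReal.ofReal (2 * a + 2 * b * d) * E := by
  rw [ENNReal.ofReal_add (by positivity) (by positivity),
    ENNReal.ofReal_mul (mul_nonneg zero_le_two hb), ENNReal.ofReal_mul zero_le_two,
    ENNReal.ofReal_mul zero_le_two, ENNReal.ofReal_ofNat]
  ring

theorem euclDist_pos {x y : ℝ × ℝ} (hxy : x ≠ y) : 0 < euclDist x y := by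
  rw [euclDist, Real.sqrt_pos]
  rcases not_and_or.1 (mt Prod.ext_iff.2 hxy) with h | h
  · have := sub_ne_zero.2 h; positivity
  · have := sub_ne_zero.2 h; positivity

theorem euclDist_le_of_mem_Ioo_prod {a b c d : ℝ} {x y : ℝ × ℝ}
    (hx : x ∈ Ioo a b ×ˢ Ioo c d) (hy : y ∈ Ioo a b ×ˢ Ioo c d) :
    euclDist x y ≤ (b - a) + (d - c) := by
  obtain ⟨⟨hx₁, hx₂⟩, hx₃, hx₄⟩ := hx
  obtain ⟨⟨hy₁, hy₂⟩, hy₃, hy₄⟩ := hy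
  have h₁ : |x.1 - y.1| ≤ b - a := abs_sub_le_iff.2 ⟨by linarith, by linarith⟩
  have h₂ : |x.2 - y.2| ≤ d - c := abs_sub_le_iff.2 ⟨by linarith, by linarith⟩
  refine Real.sqrt_le_iff.2 ⟨by linarith [abs_nonneg (x.1 - y.1)], ?_⟩
  nlinarith [sq_abs (x.1 - y.1), sq_abs (x.2 - y.2), abs_nonneg (x.1 - y.1),
    abs_nonneg (x.2 - y.2)]

theorem volume_Ioo_prod_Ioo (a b c d : ℝ) :
    volume (Ioo a b ×ˢ Ioo c d) = ENNReal.ofReal (b - a) * ENNReal.ofReal (d - c) := by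
  rw [Measure.volume_eq_prod, Measure.prod_prod, Real.volume_Ioo, Real.volume_Ioo]

theorem volume_Ioo_prod_Ioo_ne_top (a b c d : ℝ) : volume (Ioo a b ×ˢ Ioo c d) ≠ ∞ := by
  rw [volume_Ioo_prod_Ioo]
  exact ENNReal.mul_ne_top ENNReal.ofReal_ne_top ENNReal.ofReal_ne_top

theorem mul_rpow_two_mul_one_add_le {a s θ : ℝ} (ha : 1 ≤ a) (hs : 0 < s) (hθ : θ ≤ 1) :
    (a * s) ^ (2 * (1 + θ)) ≤ a ^ 4 * s ^ (2 * θ) * (s * s) := by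
  have ha4 : a ^ (2 * (1 + θ)) ≤ a ^ 4 := by
    exact_mod_cast Real.rpow_le_rpow_of_exponent_le ha (show 2 * (1 + θ) ≤ (4 : ℕ) by
      push_cast; linarith)
  have hs2 : s ^ (2 * (1 + θ)) = s ^ (2 * θ) * (s * s) := by
    rw [show 2 * (1 + θ) = 2 * θ + (2 : ℕ) by push_cast; ring, Real.rpow_add hs,
      Real.rpow_natCast, sq]
  rw [Real.mul_rpow (by linarith) hs.le, hs2, ← mul_assoc]
  gcongr

theorem rpow_two_mul_eq {s : ℝ} (hs : 0 < s) (θ : ℝ) : s ^ (2 * θ) = s * s * s ^ (2 * θ - 2) := by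
  rw [Real.rpow_sub hs, Real.rpow_two]
  field_simp

noncomputable def gagliardoIntegrand (s : ℝ) (v : ℝ × ℝ → ℝ) (x y : ℝ × ℝ) : ℝ≥0∞ :=
  ENNReal.ofReal ((v x - v y) ^ 2 / euclDist x y ^ (2 * (1 + s)))

theorem gagliardoSq_eq (s : ℝ) (D : Set (ℝ × ℝ)) (v : ℝ × ℝ → ℝ) :
    gagliardoSq s D v = ∫⁻ x in D, ∫⁻ y in D, gagliardoIntegrand s v x y :=
  rfl

theorem gagliardoSq_mono (s : ℝ) {D D' : Set (ℝ × ℝ)} (hD : D ⊆ D') (v : ℝ × ℝ → ℝ) :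
    gagliardoSq s D v ≤ gagliardoSq s D' v :=
  lintegral_mono' (Measure.restrict_mono hD le_rfl) fun _ =>
    lintegral_mono' (Measure.restrict_mono hD le_rfl) le_rfl

theorem ofReal_sq_sub_le_mul_gagliardoIntegrand {θ D : ℝ} (hθ : -1 ≤ θ) (v : ℝ × ℝ → ℝ)
    {x y : ℝ × ℝ} (hxy : euclDist x y ≤ D) :
    ENNReal.ofReal ((v x - v y) ^ 2)
      ≤ ENNReal.ofReal (D ^ (2 * (1 + θ))) * gagliardoIntegrand θ v x y := by
  rcases eq_or_ne x y with rfl | hne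
  · simp
  have hd := euclDist_pos hne
  have hde : 0 < euclDist x y ^ (2 * (1 + θ)) := Real.rpow_pos_of_pos hd _
  rw [gagliardoIntegrand, ← ENNReal.ofReal_mul (Real.rpow_nonneg (hd.le.trans hxy) _)]
  refine ENNReal.ofReal_le_ofReal ?_
  calc (v x - v y) ^ 2
      = euclDist x y ^ (2 * (1 + θ)) * ((v x - v y) ^ 2 / euclDist x y ^ (2 * (1 + θ))) := by
        field_simp
    _ ≤ D ^ (2 * (1 + θ)) * ((v x - v y) ^ 2 / euclDist x y ^ (2 * (1 + θ))) := by
        gcongr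
        linarith

theorem sq_sub_meanValue_le_lintegral_gagliardoIntegrand {θ a s : ℝ} {B : Set (ℝ × ℝ)}
    {u : ℝ × ℝ → ℝ} (hθ₀ : -1 ≤ θ) (hθ₁ : θ ≤ 1) (ha : 1 ≤ a) (hs : 0 < s)
    (hBm : MeasurableSet B) (hB : volume B ≠ ∞) (hvol : ENNReal.ofReal (s * s) ≤ volume B)
    (hu : MemLp u 2 (volume.restrict B)) {x : ℝ × ℝ} (hx : ∀ y ∈ B, euclDist x y ≤ a * s) :
    ENNReal.ofReal ((u x - meanValue B u) ^ 2)
      ≤ ENNReal.ofReal (a ^ 4 * s ^ (2 * θ)) * ∫⁻ y in B, gagliardoIntegrand θ u x y := by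
  have hB₀ : volume B ≠ 0 := (lt_of_lt_of_le (by positivity) hvol).ne'
  have hconst : (volume B)⁻¹ * ENNReal.ofReal ((a * s) ^ (2 * (1 + θ)))
      ≤ ENNReal.ofReal (a ^ 4 * s ^ (2 * θ)) := by
    calc (volume B)⁻¹ * ENNReal.ofReal ((a * s) ^ (2 * (1 + θ)))
        ≤ ENNReal.ofReal ((s * s)⁻¹) * ENNReal.ofReal (a ^ 4 * s ^ (2 * θ) * (s * s)) := by
          rw [ENNReal.ofReal_inv_of_pos (by positivity)]
          gcongr
          exact mul_rpow_two_mul_one_add_le ha hs hθ₁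
      _ = ENNReal.ofReal (a ^ 4 * s ^ (2 * θ)) := by
          rw [← ENNReal.ofReal_mul (by positivity)]
          congr 1
          field_simp
  calc ENNReal.ofReal ((u x - meanValue B u) ^ 2)
      ≤ (volume B)⁻¹ * ∫⁻ y in B, ENNReal.ofReal ((u x - u y) ^ 2) :=
        sq_sub_meanValue_le hB₀ hB hu (u x)
    _ ≤ (volume B)⁻¹ * ∫⁻ y in B,
          ENNReal.ofReal ((a * s) ^ (2 * (1 + θ))) * gagliardoIntegrand θ u x y :=
        mul_le_mul_right (setLIntegral_mono' hBm fun y hy =>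
          ofReal_sq_sub_le_mul_gagliardoIntegrand hθ₀ u (hx y hy)) _
    _ ≤ ENNReal.ofReal (a ^ 4 * s ^ (2 * θ)) * ∫⁻ y in B, gagliardoIntegrand θ u x y := by
        rw [lintegral_const_mul' _ _ ENNReal.ofReal_ne_top, ← mul_assoc]
        gcongr

theorem lintegral_sq_sub_meanValue_le_gagliardoSq {θ a s : ℝ} {B : Set (ℝ × ℝ)}
    {u : ℝ × ℝ → ℝ} (hθ₀ : -1 ≤ θ) (hθ₁ : θ ≤ 1) (ha : 1 ≤ a) (hs : 0 < s)
    (hBm : MeasurableSet B) (hB : volume B ≠ ∞) (hvol : ENNReal.ofReal (s * s) ≤ volume B)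
    (hu : MemLp u 2 (volume.restrict B)) (hdiam : ∀ x ∈ B, ∀ y ∈ B, euclDist x y ≤ a * s) :
    ∫⁻ x in B, ENNReal.ofReal ((u x - meanValue B u) ^ 2)
      ≤ ENNReal.ofReal (a ^ 4 * s ^ (2 * θ)) * gagliardoSq θ B u := by
  rw [gagliardoSq_eq, ← lintegral_const_mul' _ _ ENNReal.ofReal_ne_top]
  exact setLIntegral_mono' hBm fun x hx =>
    sq_sub_meanValue_le_lintegral_gagliardoIntegrand hθ₀ hθ₁ ha hs hBm hB hvol hu (hdiam x hx)

theorem sq_sub_meanValue_le_of_subset {B C : Set (ℝ × ℝ)} {u : ℝ × ℝ → ℝ} (hBC : B ⊆ C)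
    (hB₀ : volume B ≠ 0) (hB : volume B ≠ ∞) (hu : MemLp u 2 (volume.restrict B)) (v : ℝ) :
    ENNReal.ofReal ((v - meanValue B u) ^ 2)
      ≤ (volume B)⁻¹ * ∫⁻ y in C, ENNReal.ofReal ((u y - v) ^ 2) := by
  refine (sq_sub_meanValue_le hB₀ hB hu v).trans ?_
  simp_rw [sub_sq_comm (u _) v]
  gcongr

def clampedBox (h x₁ s : ℝ) : Set (ℝ × ℝ) :=
  Ioo (max 0 (x₁ - s)) (min h (x₁ + s)) ×ˢ Ioo 0 s

section clampedBox

variable {h x₁ s t : ℝ}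

theorem measurableSet_clampedBox : MeasurableSet (clampedBox h x₁ s) :=
  measurableSet_Ioo.prod measurableSet_Ioo

theorem clampedBox_subset_square (hs : s ≤ h) :
    clampedBox h x₁ s ⊆ Ioo 0 h ×ˢ Ioo 0 h :=
  prod_mono (Ioo_subset_Ioo (le_max_left _ _) (min_le_left _ _)) (Ioo_subset_Ioo le_rfl hs)

theorem clampedBox_mono (hst : s ≤ t) : clampedBox h x₁ s ⊆ clampedBox h x₁ t :=
  prod_mono (Ioo_subset_Ioo (by gcongr) (by gcongr)) (Ioo_subset_Ioo le_rfl hst)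

theorem clampedBox_self (hx₁ : x₁ ∈ Ioo 0 h) : clampedBox h x₁ h = Ioo 0 h ×ˢ Ioo 0 h := by
  rw [clampedBox, max_eq_left (by linarith [hx₁.2]), min_eq_left (by linarith [hx₁.1])]

theorem mem_clampedBox {x : ℝ × ℝ} (hx : x ∈ Ioo 0 h ×ˢ Ioo 0 s) : x ∈ clampedBox h x.1 s := by
  obtain ⟨⟨hx₁, hx₂⟩, hx₃, hx₄⟩ := hx
  exact ⟨⟨max_lt hx₁ (by linarith), lt_min hx₂ (by linarith)⟩, hx₃, hx₄⟩

theorem ofReal_mul_self_le_volume_clampedBox (hx₁ : x₁ ∈ Ioo 0 h) (hs : 0 ≤ s) (hsh : s ≤ h) :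
    ENNReal.ofReal (s * s) ≤ volume (clampedBox h x₁ s) := by
  have hwidth : s ≤ min h (x₁ + s) - max 0 (x₁ - s) := by
    rw [le_sub_iff_add_le, le_min_iff]
    constructor <;> rw [← le_sub_iff_add_le'] <;> apply max_le <;> linarith [hx₁.1, hx₁.2]
  rw [clampedBox, volume_Ioo_prod_Ioo, sub_zero, ENNReal.ofReal_mul hs]
  gcongr

theorem euclDist_le_of_mem_clampedBox {y z : ℝ × ℝ} (hy : y ∈ clampedBox h x₁ s)
    (hz : z ∈ clampedBox h x₁ s) : euclDist y z ≤ 3 * s := by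
  have := euclDist_le_of_mem_Ioo_prod hy hz
  have : min h (x₁ + s) - max 0 (x₁ - s) ≤ 2 * s := by
    linarith [min_le_right h (x₁ + s), le_max_right 0 (x₁ - s)]
  linarith

theorem sq_meanValue_clampedBox_sub_le {θ : ℝ} {u : ℝ × ℝ → ℝ} (hθ₀ : -1 ≤ θ) (hθ₁ : θ ≤ 1)
    (hx₁ : x₁ ∈ Ioo 0 h) (hs : 0 < s) (hst : s ≤ t) (ht : t ≤ 2 * s) (hth : t ≤ h)
    (hu : MemLp u 2 (volume.restrict (Ioo 0 h ×ˢ Ioo 0 h))) :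
    ENNReal.ofReal ((meanValue (clampedBox h x₁ t) u - meanValue (clampedBox h x₁ s) u) ^ 2)
      ≤ ENNReal.ofReal (6 ^ 4 * s ^ (2 * θ - 2)) * gagliardoSq θ (Ioo 0 h ×ˢ Ioo 0 h) u := by
  have hsub : clampedBox h x₁ s ⊆ clampedBox h x₁ t := clampedBox_mono hst
  have hvol_s := ofReal_mul_self_le_volume_clampedBox hx₁ hs.le (hst.trans hth)
  have hvol_t : ENNReal.ofReal (s * s) ≤ volume (clampedBox h x₁ t) :=
    (ENNReal.ofReal_le_ofReal (by nlinarith)).trans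
      (ofReal_mul_self_le_volume_clampedBox hx₁ (hs.le.trans hst) hth)
  have hu_t : MemLp u 2 (volume.restrict (clampedBox h x₁ t)) :=
    hu.mono_measure (Measure.restrict_mono (clampedBox_subset_square hth) le_rfl)
  have hpoincare := lintegral_sq_sub_meanValue_le_gagliardoSq hθ₀ hθ₁ (by norm_num : (1 : ℝ) ≤ 6)
    hs measurableSet_clampedBox (volume_Ioo_prod_Ioo_ne_top _ _ _ _) hvol_t hu_t
    fun y hy z hz => (euclDist_le_of_mem_clampedBox hy hz).trans (by linarith)
  calc ENNReal.ofReal ((meanValue (clampedBox h x₁ t) u - meanValue (clampedBox h x₁ s) u) ^ 2)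
      ≤ (volume (clampedBox h x₁ s))⁻¹ * ∫⁻ y in clampedBox h x₁ t,
          ENNReal.ofReal ((u y - meanValue (clampedBox h x₁ t) u) ^ 2) :=
        sq_sub_meanValue_le_of_subset hsub (lt_of_lt_of_le (by positivity) hvol_s).ne'
          (volume_Ioo_prod_Ioo_ne_top _ _ _ _)
          (hu_t.mono_measure (Measure.restrict_mono hsub le_rfl)) _
    _ ≤ ENNReal.ofReal (s * s)⁻¹ * (ENNReal.ofReal (6 ^ 4 * s ^ (2 * θ))
          * gagliardoSq θ (Ioo 0 h ×ˢ Ioo 0 h) u) := by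
        rw [ENNReal.ofReal_inv_of_pos (by positivity)]
        gcongr
        exact hpoincare.trans (by gcongr; exact gagliardoSq_mono θ (clampedBox_subset_square hth) _)
    _ = ENNReal.ofReal (6 ^ 4 * s ^ (2 * θ - 2)) * gagliardoSq θ (Ioo 0 h ×ˢ Ioo 0 h) u := by
        rw [← mul_assoc, ← ENNReal.ofReal_mul (by positivity), rpow_two_mul_eq hs]
        congr 2
        field_simp

end clampedBox

theorem sq_sub_le_of_sq_sub_succ_le {m : ℕ → ℝ} {A ρ : ℝ} (hA : 0 ≤ A) (hρ₀ : 0 ≤ ρ)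
    (hρ₁ : ρ < 1) {n : ℕ} (hm : ∀ k < n, (m k - m (k + 1)) ^ 2 ≤ A * (ρ ^ k) ^ 2) :
    (m 0 - m n) ^ 2 ≤ A * (1 - ρ)⁻¹ ^ 2 := by
  have habs : |m 0 - m n| ≤ √A * (1 - ρ)⁻¹ :=
    calc |m 0 - m n| = |∑ k ∈ Finset.range n, (m k - m (k + 1))| := by
          rw [Finset.sum_range_sub']
      _ ≤ ∑ k ∈ Finset.range n, |m k - m (k + 1)| := Finset.abs_sum_le_sum_abs _ _
      _ ≤ ∑ k ∈ Finset.range n, √A * ρ ^ k := Finset.sum_le_sum fun k hk => by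
          simpa [Real.sqrt_mul hA, Real.sqrt_sq (pow_nonneg hρ₀ k)] using
            Real.abs_le_sqrt (hm k (Finset.mem_range.1 hk))
      _ = √A * ∑ k ∈ Finset.range n, ρ ^ k := (Finset.mul_sum _ _ _).symm
      _ ≤ √A * (1 - ρ)⁻¹ := by
          gcongr
          rw [← tsum_geometric_of_lt_one hρ₀ hρ₁]
          exact (summable_geometric_of_lt_one hρ₀ hρ₁).sum_le_tsum _
            fun k _ => pow_nonneg hρ₀ k
  calc (m 0 - m n) ^ 2 = |m 0 - m n| ^ 2 := (sq_abs _).symm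
    _ ≤ (√A * (1 - ρ)⁻¹) ^ 2 := by gcongr
    _ = A * (1 - ρ)⁻¹ ^ 2 := by rw [mul_pow, Real.sq_sqrt hA]

theorem two_pow_mul_rpow {l : ℝ} (hl : 0 < l) (k : ℕ) (θ : ℝ) :
    (2 ^ k * l) ^ (2 * θ - 2) = l ^ (2 * θ - 2) * (((2 : ℝ) ^ (θ - 1)) ^ k) ^ 2 := by
  rw [Real.mul_rpow (by positivity) hl.le, mul_comm]
  congr 1
  rw [← Real.rpow_natCast, ← Real.rpow_natCast, ← Real.rpow_natCast (2 ^ (θ - 1) : ℝ) k,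
    ← Real.rpow_mul zero_le_two, ← Real.rpow_mul zero_le_two, ← Real.rpow_mul zero_le_two]
  ring_nf

theorem sq_meanValue_clampedBox_sub_meanValue_square_le {θ h l x₁ : ℝ} {u : ℝ × ℝ → ℝ}
    (hθ₀ : -1 ≤ θ) (hθ₁ : θ < 1) (hx₁ : x₁ ∈ Ioo 0 h) (hl : 0 < l) (hlh : l ≤ h)
    (hu : MemLp u 2 (volume.restrict (Ioo 0 h ×ˢ Ioo 0 h)))
    (hE : gagliardoSq θ (Ioo 0 h ×ˢ Ioo 0 h) u ≠ ∞) :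
    (meanValue (clampedBox h x₁ l) u - meanValue (Ioo 0 h ×ˢ Ioo 0 h) u) ^ 2
      ≤ 6 ^ 4 * l ^ (2 * θ - 2) * (gagliardoSq θ (Ioo 0 h ×ˢ Ioo 0 h) u).toReal
        * (1 - 2 ^ (θ - 1))⁻¹ ^ 2 := by
  classical
  have hex : ∃ n : ℕ, h ≤ 2 ^ n * l := by
    obtain ⟨n, hn⟩ := pow_unbounded_of_one_lt (h / l) one_lt_two
    exact ⟨n, (div_le_iff₀ hl).1 hn.le⟩
  set n := Nat.find hex
  set s : ℕ → ℝ := fun k => min (2 ^ k * l) h with hs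
  have hs_lt : ∀ k < n, s k = 2 ^ k * l := fun k hk =>
    min_eq_left (not_le.1 (Nat.find_min hex hk)).le
  have hs0 : s 0 = l := by simp [hs, hlh]
  have hsn : s n = h := min_eq_right (Nat.find_spec hex)
  have hstep : ∀ k < n, (meanValue (clampedBox h x₁ (s k)) u
      - meanValue (clampedBox h x₁ (s (k + 1))) u) ^ 2
      ≤ 6 ^ 4 * l ^ (2 * θ - 2) * (gagliardoSq θ (Ioo 0 h ×ˢ Ioo 0 h) u).toReal
        * (((2 : ℝ) ^ (θ - 1)) ^ k) ^ 2 := by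
    intro k hk
    have hsk := hs_lt k hk
    have hlt : 2 ^ k * l < h := not_le.1 (Nat.find_min hex hk)
    have hbox := sq_meanValue_clampedBox_sub_le hθ₀ hθ₁.le hx₁ (s := s k) (t := s (k + 1))
      (by rw [hsk]; positivity) (by rw [hsk]; exact le_min (by gcongr <;> simp) hlt.le)
      (by rw [hsk]; exact (min_le_left _ _).trans (le_of_eq (by ring)))
      (min_le_right _ _) hu
    rw [sub_sq_comm, hsk, two_pow_mul_rpow hl, ENNReal.ofReal_le_iff_le_toReal
      (ENNReal.mul_ne_top ENNReal.ofReal_ne_top hE), ENNReal.toReal_mul,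
      ENNReal.toReal_ofReal (by positivity)] at hbox
    rw [hsk]
    convert hbox using 1
    ring
  have := sq_sub_le_of_sq_sub_succ_le (by positivity) (by positivity)
    (Real.rpow_lt_one_of_one_lt_of_neg one_lt_two (by linarith)) hstep
  rwa [hs0, hsn, clampedBox_self hx₁] at this

theorem sq_sub_meanValue_square_le_of_mem_rect {θ h l : ℝ} {u : ℝ × ℝ → ℝ}
    (hθ₀ : -1 ≤ θ) (hθ₁ : θ < 1) (hl : 0 < l) (hlh : l ≤ h)
    (hu : MemLp u 2 (volume.restrict (Ioo 0 h ×ˢ Ioo 0 h)))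
    (hE : gagliardoSq θ (Ioo 0 h ×ˢ Ioo 0 h) u ≠ ∞) {x : ℝ × ℝ} (hx : x ∈ Ioo 0 h ×ˢ Ioo 0 l) :
    ENNReal.ofReal ((u x - meanValue (Ioo 0 h ×ˢ Ioo 0 h) u) ^ 2)
      ≤ 2 * (ENNReal.ofReal (3 ^ 4 * l ^ (2 * θ))
          * ∫⁻ y in Ioo 0 h ×ˢ Ioo 0 h, gagliardoIntegrand θ u x y)
        + 2 * (ENNReal.ofReal (6 ^ 4 * l ^ (2 * θ - 2) * (1 - 2 ^ (θ - 1))⁻¹ ^ 2)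
          * gagliardoSq θ (Ioo 0 h ×ˢ Ioo 0 h) u) := by
  have hsub := clampedBox_subset_square (x₁ := x.1) hlh
  have hlocal := sq_sub_meanValue_le_lintegral_gagliardoIntegrand hθ₀ hθ₁.le
    (by norm_num : (1 : ℝ) ≤ 3) hl measurableSet_clampedBox (volume_Ioo_prod_Ioo_ne_top _ _ _ _)
    (ofReal_mul_self_le_volume_clampedBox hx.1 hl.le hlh)
    (hu.mono_measure (Measure.restrict_mono hsub le_rfl))
    fun y hy => euclDist_le_of_mem_clampedBox (mem_clampedBox hx) hy
  have hchain := sq_meanValue_clampedBox_sub_meanValue_square_le hθ₀ hθ₁ hx.1 hl hlh hu hE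
  refine (ofReal_sq_sub_le _ (meanValue (clampedBox h x.1 l) u) _).trans ?_
  gcongr
  · exact hlocal.trans (by gcongr)
  · rw [← ENNReal.ofReal_toReal hE, ← ENNReal.ofReal_mul (by positivity)]
    exact ENNReal.ofReal_le_ofReal (hchain.trans_eq (by ring))

theorem lintegral_rect_sq_sub_meanValue_square_le {θ h l : ℝ} {u : ℝ × ℝ → ℝ}
    (hθ₀ : -1 ≤ θ) (hθ₁ : θ < 1) (hl : 0 < l) (hlh : l ≤ h)
    (hu : MemLp u 2 (volume.restrict (Ioo 0 h ×ˢ Ioo 0 h)))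
    (hE : gagliardoSq θ (Ioo 0 h ×ˢ Ioo 0 h) u ≠ ∞) :
    ∫⁻ x in Ioo 0 h ×ˢ Ioo 0 l, ENNReal.ofReal ((u x - meanValue (Ioo 0 h ×ˢ Ioo 0 h) u) ^ 2)
      ≤ ENNReal.ofReal (2 * (3 ^ 4 + 6 ^ 4 * (1 - 2 ^ (θ - 1))⁻¹ ^ 2) * (h * l * l ^ (2 * θ - 2)))
        * gagliardoSq θ (Ioo 0 h ×ˢ Ioo 0 h) u := by
  set S : Set (ℝ × ℝ) := Ioo 0 h ×ˢ Ioo 0 h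
  set E := gagliardoSq θ S u
  set W : ℝ := (1 - 2 ^ (θ - 1))⁻¹
  have hRS : Ioo 0 h ×ˢ Ioo 0 l ⊆ S := prod_mono subset_rfl (Ioo_subset_Ioo le_rfl hlh)
  have hh : 0 < h := hl.trans_le hlh
  calc ∫⁻ x in Ioo 0 h ×ˢ Ioo 0 l, ENNReal.ofReal ((u x - meanValue S u) ^ 2)
      ≤ ∫⁻ x in Ioo 0 h ×ˢ Ioo 0 l,
          (2 * (ENNReal.ofReal (3 ^ 4 * l ^ (2 * θ)) * ∫⁻ y in S, gagliardoIntegrand θ u x y)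
            + 2 * (ENNReal.ofReal (6 ^ 4 * l ^ (2 * θ - 2) * W ^ 2) * E)) :=
        setLIntegral_mono' (measurableSet_Ioo.prod measurableSet_Ioo) fun x hx =>
          sq_sub_meanValue_square_le_of_mem_rect hθ₀ hθ₁ hl hlh hu hE hx
    _ = 2 * (ENNReal.ofReal (3 ^ 4 * l ^ (2 * θ))
            * ∫⁻ x in Ioo 0 h ×ˢ Ioo 0 l, ∫⁻ y in S, gagliardoIntegrand θ u x y)
          + 2 * (ENNReal.ofReal (6 ^ 4 * l ^ (2 * θ - 2) * W ^ 2) * E)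
            * (ENNReal.ofReal h * ENNReal.ofReal l) := by
        rw [lintegral_add_right' _ aemeasurable_const, setLIntegral_const, volume_Ioo_prod_Ioo,
          lintegral_const_mul' _ _ (by simp), lintegral_const_mul' _ _ ENNReal.ofReal_ne_top,
          sub_zero, sub_zero]
    _ ≤ 2 * (ENNReal.ofReal (3 ^ 4 * l ^ (2 * θ)) * E)
          + 2 * (ENNReal.ofReal (6 ^ 4 * l ^ (2 * θ - 2) * W ^ 2) * E)
            * (ENNReal.ofReal h * ENNReal.ofReal l) := by
        gcongr
        exact lintegral_mono' (Measure.restrict_mono hRS le_rfl) le_rfl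
    _ ≤ _ := by
        rw [← ENNReal.ofReal_mul hh.le, two_mul_ofReal_mul_add_eq (by positivity) (by positivity)
          (by positivity)]
        gcongr
        rw [rpow_two_mul_eq hl]
        nlinarith [show 0 ≤ l * l ^ (2 * θ - 2) by positivity]

theorem sq_meanValue_square_sub_meanValue_le {θ c h l : ℝ} {K : Set (ℝ × ℝ)} {u : ℝ × ℝ → ℝ}
    (hθ₀ : -1 ≤ θ) (hθ₁ : θ < 1) (hc : 0 < c) (hl : 0 < l) (hlh : l ≤ h)
    (hKR : K ⊆ Ioo 0 h ×ˢ Ioo 0 l) (hKvol : ENNReal.ofReal (h * l / c) ≤ volume K)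
    (hu : MemLp u 2 (volume.restrict (Ioo 0 h ×ˢ Ioo 0 h)))
    (hE : gagliardoSq θ (Ioo 0 h ×ˢ Ioo 0 h) u ≠ ∞) :
    ENNReal.ofReal ((meanValue (Ioo 0 h ×ˢ Ioo 0 h) u - meanValue K u) ^ 2)
      ≤ ENNReal.ofReal (c * (2 * (3 ^ 4 + 6 ^ 4 * (1 - 2 ^ (θ - 1))⁻¹ ^ 2)) * l ^ (2 * θ - 2))
        * gagliardoSq θ (Ioo 0 h ×ˢ Ioo 0 h) u := by
  have hh : 0 < h := hl.trans_le hlh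
  have hKS : K ⊆ Ioo 0 h ×ˢ Ioo 0 h := hKR.trans (prod_mono subset_rfl (Ioo_subset_Ioo le_rfl hlh))
  have hK : volume K ≠ ∞ := ne_top_of_le_ne_top (volume_Ioo_prod_Ioo_ne_top _ _ _ _)
    (measure_mono hKS)
  calc ENNReal.ofReal ((meanValue (Ioo 0 h ×ˢ Ioo 0 h) u - meanValue K u) ^ 2)
      ≤ (volume K)⁻¹ * ∫⁻ y in Ioo 0 h ×ˢ Ioo 0 l,
          ENNReal.ofReal ((u y - meanValue (Ioo 0 h ×ˢ Ioo 0 h) u) ^ 2) :=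
        sq_sub_meanValue_le_of_subset hKR (lt_of_lt_of_le (by positivity) hKvol).ne' hK
          (hu.mono_measure (Measure.restrict_mono hKS le_rfl)) _
    _ ≤ ENNReal.ofReal (c / (h * l)) * (ENNReal.ofReal
          (2 * (3 ^ 4 + 6 ^ 4 * (1 - 2 ^ (θ - 1))⁻¹ ^ 2) * (h * l * l ^ (2 * θ - 2)))
          * gagliardoSq θ (Ioo 0 h ×ˢ Ioo 0 h) u) := by
        gcongr
        · rw [← inv_div, ENNReal.ofReal_inv_of_pos (by positivity)]
          exact ENNReal.inv_le_inv' hKvol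
        · exact lintegral_rect_sq_sub_meanValue_square_le hθ₀ hθ₁ hl hlh hu hE
    _ = _ := by
        rw [← mul_assoc, ← ENNReal.ofReal_mul (by positivity)]
        congr 2
        field_simp

theorem exists_lintegral_sq_sub_meanValue_le {θ c : ℝ} (hθ₀ : -1 ≤ θ) (hθ₁ : θ < 1)
    (hc : 0 < c) :
    ∃ C : ℝ, 0 < C ∧ ∀ h l : ℝ, 0 < l → l ≤ h →
      ∀ K : Set (ℝ × ℝ), K ⊆ Ioo 0 h ×ˢ Ioo 0 l → ENNReal.ofReal (h * l / c) ≤ volume K →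
      ∀ u : ℝ × ℝ → ℝ, MemLp u 2 (volume.restrict (Ioo 0 h ×ˢ Ioo 0 h)) →
        gagliardoSq θ (Ioo 0 h ×ˢ Ioo 0 h) u ≠ ∞ →
        ∫⁻ x in Ioo 0 h ×ˢ Ioo 0 h, ENNReal.ofReal ((u x - meanValue K u) ^ 2)
          ≤ ENNReal.ofReal (C * (h * h * l ^ (2 * θ - 2)))
            * gagliardoSq θ (Ioo 0 h ×ˢ Ioo 0 h) u := by
  set C₁ : ℝ := c * (2 * (3 ^ 4 + 6 ^ 4 * (1 - 2 ^ (θ - 1))⁻¹ ^ 2))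
  refine ⟨2 * 2 ^ 4 + 2 * C₁, by positivity, fun h l hl hlh K hKR hKvol u hu hE => ?_⟩
  set S : Set (ℝ × ℝ) := Ioo 0 h ×ˢ Ioo 0 h
  have hh : 0 < h := hl.trans_le hlh
  have hvolS : volume S = ENNReal.ofReal (h * h) := by
    rw [volume_Ioo_prod_Ioo, sub_zero, ENNReal.ofReal_mul hh.le]
  have hpoincare : ∫⁻ x in S, ENNReal.ofReal ((u x - meanValue S u) ^ 2)
      ≤ ENNReal.ofReal (2 ^ 4 * h ^ (2 * θ)) * gagliardoSq θ S u :=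
    lintegral_sq_sub_meanValue_le_gagliardoSq hθ₀ hθ₁.le one_le_two hh
      (measurableSet_Ioo.prod measurableSet_Ioo) (volume_Ioo_prod_Ioo_ne_top _ _ _ _) hvolS.ge hu
      fun x hx y hy => (euclDist_le_of_mem_Ioo_prod hx hy).trans_eq (by ring)
  have hh2θ : h ^ (2 * θ) ≤ h * h * l ^ (2 * θ - 2) := by
    rw [rpow_two_mul_eq hh]
    exact mul_le_mul_of_nonneg_left (Real.rpow_le_rpow_of_nonpos hl hlh (by linarith))
      (by positivity)
  calc ∫⁻ x in S, ENNReal.ofReal ((u x - meanValue K u) ^ 2)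
      ≤ ∫⁻ x in S, (2 * ENNReal.ofReal ((u x - meanValue S u) ^ 2)
          + 2 * ENNReal.ofReal ((meanValue S u - meanValue K u) ^ 2)) :=
        lintegral_mono fun x => ofReal_sq_sub_le _ _ _
    _ = 2 * (∫⁻ x in S, ENNReal.ofReal ((u x - meanValue S u) ^ 2))
          + 2 * ENNReal.ofReal ((meanValue S u - meanValue K u) ^ 2) * volume S := by
        rw [lintegral_add_right' _ aemeasurable_const, setLIntegral_const,
          lintegral_const_mul' _ _ (by simp)]
    _ ≤ 2 * (ENNReal.ofReal (2 ^ 4 * h ^ (2 * θ)) * gagliardoSq θ S u)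
          + 2 * (ENNReal.ofReal (C₁ * l ^ (2 * θ - 2)) * gagliardoSq θ S u)
            * ENNReal.ofReal (h * h) := by
        rw [hvolS]
        gcongr
        exact sq_meanValue_square_sub_meanValue_le hθ₀ hθ₁ hc hl hlh hKR hKvol hu hE
    _ ≤ _ := by
        rw [two_mul_ofReal_mul_add_eq (by positivity) (by positivity) (by positivity)]
        gcongr
        nlinarith

theorem inv_tau_rpow_le_varrho_sq {θ κ₀ κ₁ : ℝ} (hθ₀ : 1 / 2 ≤ θ) (hθ₁ : θ < 1) (hκ₁ : 0 < κ₁) :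
    (tau κ₀ κ₁ θ)⁻¹ ^ (2 - 2 * θ) ≤ varrho κ₀ κ₁ ^ 2 := by
  have ht : 0 < 1 - θ := by linarith
  -- the exponent is a concave quadratic in `1 - θ ∈ (0, 1/2]` and `2 log ϱ` is its maximum there
  have hexp : (tau κ₀ κ₁ θ)⁻¹ ^ (2 - 2 * θ) = Real.exp (rfun κ₁ θ - 2 * (1 - θ) * (1 + κ₀)) := by
    rw [tau, ← Real.exp_neg, ← Real.exp_mul]
    congr 1
    field_simp
    ring
  have hsq : ∀ z : ℝ, Real.exp z ^ 2 = Real.exp (2 * z) := fun z => by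
    rw [← Real.exp_nat_mul]; norm_num
  rw [hexp, varrho, rfun]
  split_ifs with h₁ h₂
  · rw [hsq, Real.exp_le_exp]
    have := (lt_div_iff₀ hκ₁).1 h₁
    nlinarith [mul_pos hκ₁ ht, mul_nonneg hκ₁.le (sq_nonneg (1 - θ))]
  · rw [hsq, Real.exp_le_exp]
    have := (div_lt_iff₀ hκ₁).1 h₂
    nlinarith [mul_pos hκ₁ ht, mul_nonneg hκ₁.le (sq_nonneg (1 - θ)), sq_nonneg (1 - 2 * θ)]
  · rw [hsq, Real.exp_le_exp, mul_div_assoc', le_div_iff₀ (by positivity)]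
    nlinarith [sq_nonneg (4 * κ₁ * (1 - θ) - (κ₁ - 4 - 4 * κ₀))]

theorem mul_self_mul_rpow_le_varrho_sq {θ κ₀ κ₁ h l : ℝ} (hθ₀ : 1 / 2 ≤ θ) (hθ₁ : θ < 1)
    (hκ₁ : 0 < κ₁) (hh : 0 < h) (hl : 0 < l) (hτl : tau κ₀ κ₁ θ * h ≤ l) :
    h * h * l ^ (2 * θ - 2) ≤ varrho κ₀ κ₁ ^ 2 * h ^ (2 * θ) := by
  have hτ : 0 < tau κ₀ κ₁ θ := Real.exp_pos _
  have hhl : h / l ≤ (tau κ₀ κ₁ θ)⁻¹ := by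
    rw [div_le_iff₀ hl, ← div_eq_inv_mul, le_div_iff₀ hτ, mul_comm]
    exact hτl
  have hid : h * h * l ^ (2 * θ - 2) = (h / l) ^ (2 - 2 * θ) * h ^ (2 * θ) := by
    rw [Real.div_rpow hh.le hl.le, rpow_two_mul_eq hh, show 2 * θ - 2 = -(2 - 2 * θ) by ring,
      Real.rpow_neg hl.le, Real.rpow_neg hh.le]
    field_simp
  rw [hid]
  gcongr
  exact (Real.rpow_le_rpow (by positivity) hhl (by linarith)).trans
    (inv_tau_rpow_le_varrho_sq hθ₀ hθ₁ hκ₁)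

/-- Combination of the anisotropic projection estimate (5.8) with the
shape-regularity condition `l ≥ τ(θ)h` of Assumption (G1) and the uniform bound
(5.10): there is `C = C(θ,c)` such that
`∫_S (u − ū_K)² ≤ C (1 + ϱ(κ₀,κ₁)²) h^{2θ} |u|_{θ,S}²`. -/
theorem anisotropic_estimate_shape_regular (θ : ℝ) (hθ : θ ∈ Set.Ioo (1/2 : ℝ) 1)
    (c : ℝ) (hc : 1 ≤ c) :
    ∃ C : ℝ, 0 < C ∧ ∀ κ₀ κ₁ : ℝ, 0 < κ₁ →
      ∀ h l : ℝ, 0 < h → tau κ₀ κ₁ θ * h ≤ l → l ≤ h →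
      ∀ K : Set (ℝ × ℝ), MeasurableSet K → K ⊆ Ioo (0 : ℝ) h ×ˢ Ioo (0 : ℝ) l →
        ENNReal.ofReal (h * l / c) ≤ volume K →
        ∀ u : ℝ × ℝ → ℝ, Measurable u →
          MemLp u 2 (volume.restrict (Ioo (0 : ℝ) h ×ˢ Ioo (0 : ℝ) h)) →
          gagliardoSq θ (Ioo (0 : ℝ) h ×ˢ Ioo (0 : ℝ) h) u < ⊤ →
          (∫⁻ x in Ioo (0 : ℝ) h ×ˢ Ioo (0 : ℝ) h,
              ENNReal.ofReal ((u x - meanValue K u) ^ 2)) ≤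
            ENNReal.ofReal (C * (1 + varrho κ₀ κ₁ ^ 2) * h ^ (2 * θ)) *
              gagliardoSq θ (Ioo (0 : ℝ) h ×ˢ Ioo (0 : ℝ) h) u := by
  obtain ⟨C, hC, hest⟩ := exists_lintegral_sq_sub_meanValue_le (c := c) (by linarith [hθ.1])
    hθ.2 (by linarith)
  refine ⟨C, hC, fun κ₀ κ₁ hκ₁ h l hh hτl hlh K _ hKR hKvol u _ hu hE => ?_⟩
  have hl : 0 < l := lt_of_lt_of_le (mul_pos (Real.exp_pos _) hh) hτl
  refine (hest h l hl hlh K hKR hKvol u hu hE.ne).trans ?_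
  gcongr ENNReal.ofReal ?_ * _
  have := mul_self_mul_rpow_le_varrho_sq hθ.1.le hθ.2 hκ₁ hh hl hτl
  nlinarith [Real.rpow_nonneg hh.le (2 * θ)]
end

section
/- Let s ∈ (0, 1], let c₁ > 0, let h_K > 0, let B ⊆ ℝ² be a closed ball of diameter 3 h_K, let K ⊆ B be a measurable set with |K| > 0, and let h_e > 0 satisfy h_e h_K ≤ c₁ |K|. Then for every u ∈ L²(B) with |u|_{s,B} < ∞, one has h_e^{1/2} |ū_B − ū_K| ≤ 6 √(c₁/π) h_K^{s − 1/2} |u|_{s,B}, where ū_B and ū_K are the mean values of u over B and K respectively. -/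
open MeasureTheory Set
open scoped ENNReal

/-! Writing `ū_B - ū_K = ⨍_K ⨍_B (u y - u x)` and applying Jensen's inequality to both averages
bounds `|ū_B - ū_K|²` by the mean of `|u y - u x|²` over `K × B`. Two points of `B` are at
distance at most `3 h_K`, so this integrand is at most `(3 h_K)^{2(1+s)}` times the Gagliardo
kernel, whence `|ū_B - ū_K|² ≤ (3 h_K)^{2(1+s)} |u|²_{s,B} / (|K| |B|)`. Inserting
`|B| = π (3 h_K / 2)²` and `h_e / |K| ≤ c₁ / h_K` leaves the constant `2 · 3^s ≤ 6`. -/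

namespace MeasureTheory

variable {α E : Type*} [MeasurableSpace α] {μ : Measure α}
  [NormedAddCommGroup E] [NormedSpace ℝ E]

theorem enorm_average_sq_le_laverage [IsFiniteMeasure μ] (f : α → E) :
    ‖⨍ x, f x ∂μ‖ₑ ^ 2 ≤ ⨍⁻ x, ‖f x‖ₑ ^ 2 ∂μ := by
  rcases eq_zero_or_neZero μ with rfl | _
  · simp
  by_cases hf : Integrable f ((μ univ)⁻¹ • μ)
  · calc ‖⨍ x, f x ∂μ‖ₑ ^ 2 ≤ eLpNorm f 1 ((μ univ)⁻¹ • μ) ^ 2 := by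
          rw [average_eq', eLpNorm_one_eq_lintegral_enorm]
          gcongr
          exact enorm_integral_le_lintegral_enorm _
      _ ≤ eLpNorm f 2 ((μ univ)⁻¹ • μ) ^ 2 := by
          gcongr
          exact eLpNorm_le_eLpNorm_of_exponent_le one_le_two hf.1
      _ = ⨍⁻ x, ‖f x‖ₑ ^ 2 ∂μ := by
          simpa [laverage_eq'] using eLpNorm_nnreal_pow_eq_lintegral (f := f)
            (μ := (μ univ)⁻¹ • μ) (p := 2) two_ne_zero
  · simp [average_eq', integral_undef hf]

theorem average_sub {f g : α → E} (hf : Integrable f μ) (hg : Integrable g μ) :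
    ⨍ x, f x - g x ∂μ = ⨍ x, f x ∂μ - ⨍ x, g x ∂μ := by
  simp only [average_eq, integral_sub hf hg, smul_sub]

theorem enorm_setAverage_sub_setAverage_sq_le [CompleteSpace E] {K B : Set α} {u : α → E}
    (hKB : K ⊆ B) (hK : μ K ≠ 0) (hB : μ B ≠ ∞) (hu : IntegrableOn u B μ) :
    ‖⨍ y in B, u y ∂μ - ⨍ x in K, u x ∂μ‖ₑ ^ 2 ≤
      (∫⁻ x in K, ∫⁻ y in B, ‖u y - u x‖ₑ ^ 2 ∂μ ∂μ) / (μ K * μ B) := by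
  have hB₀ : μ B ≠ 0 := fun h => hK (measure_mono_null hKB h)
  have hK' : μ K ≠ ∞ := ne_top_of_le_ne_top hB (measure_mono hKB)
  have : IsFiniteMeasure (μ.restrict B) := isFiniteMeasure_restrict.mpr hB
  have : IsFiniteMeasure (μ.restrict K) := isFiniteMeasure_restrict.mpr hK'
  have hinner (x : α) : ⨍ y in B, u y - u x ∂μ = ⨍ y in B, u y ∂μ - u x := by
    rw [average_sub hu (integrable_const _), setAverage_const hB₀ hB]
  have hdiff : ⨍ y in B, u y ∂μ - ⨍ x in K, u x ∂μ = ⨍ x in K, ⨍ y in B, u y - u x ∂μ ∂μ := by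
    simp only [hinner]
    rw [average_sub (integrable_const _) (hu.mono_set hKB), setAverage_const hK hK']
  calc ‖⨍ y in B, u y ∂μ - ⨍ x in K, u x ∂μ‖ₑ ^ 2
      ≤ ⨍⁻ x in K, ‖⨍ y in B, u y - u x ∂μ‖ₑ ^ 2 ∂μ := by
        rw [hdiff]; exact enorm_average_sq_le_laverage _
    _ ≤ ⨍⁻ x in K, ⨍⁻ y in B, ‖u y - u x‖ₑ ^ 2 ∂μ ∂μ :=
        laverage_mono_ae (.of_forall fun x => enorm_average_sq_le_laverage _)
    _ = (∫⁻ x in K, ∫⁻ y in B, ‖u y - u x‖ₑ ^ 2 ∂μ ∂μ) / (μ K * μ B) := by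
        simp only [setLAverage_eq, ENNReal.div_eq_inv_mul, lintegral_const_mul' _ _
          (ENNReal.inv_ne_top.mpr hB₀), ENNReal.mul_inv (.inl hK) (.inl hK'), mul_assoc]

end MeasureTheory

open Complex (measurableEquivRealProd)

theorem euclDist_eq_dist (x y : ℝ × ℝ) :
    euclDist x y = dist (measurableEquivRealProd.symm x) (measurableEquivRealProd.symm y) := by
  simp [euclDist, Complex.dist_eq_re_im, Complex.measurableEquivRealProd]

theorem euclDist_nonneg (x y : ℝ × ℝ) : 0 ≤ euclDist x y :=
  Real.sqrt_nonneg _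

theorem eq_of_euclDist_eq_zero {x y : ℝ × ℝ} (h : euclDist x y = 0) : x = y := by
  rw [euclDist_eq_dist, dist_eq_zero] at h
  exact measurableEquivRealProd.symm.injective h

theorem euclDist_le_of_mem_closedBall {z x y : ℝ × ℝ} {r : ℝ} (hx : euclDist x z ≤ r)
    (hy : euclDist y z ≤ r) : euclDist x y ≤ 2 * r := by
  rw [euclDist_eq_dist] at *
  linarith [dist_triangle_right (measurableEquivRealProd.symm x) (measurableEquivRealProd.symm y)
    (measurableEquivRealProd.symm z)]

theorem setOf_euclDist_le_eq_preimage (z : ℝ × ℝ) (r : ℝ) :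
    {x | euclDist x z ≤ r} =
      measurableEquivRealProd.symm ⁻¹'
        Metric.closedBall (measurableEquivRealProd.symm z) r := by
  ext x
  simp [euclDist_eq_dist]

theorem measurableSet_setOf_euclDist_le (z : ℝ × ℝ) (r : ℝ) :
    MeasurableSet {x | euclDist x z ≤ r} := by
  rw [setOf_euclDist_le_eq_preimage]
  exact measurableEquivRealProd.symm.measurable measurableSet_closedBall

theorem volume_setOf_euclDist_le (z : ℝ × ℝ) (r : ℝ) :
    volume {x | euclDist x z ≤ r} = ENNReal.ofReal r ^ 2 * NNReal.pi := by
  rw [setOf_euclDist_le_eq_preimage, Complex.volume_preserving_equiv_real_prod.symm.measure_preimage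
    measurableSet_closedBall.nullMeasurableSet, Complex.volume_closedBall]

theorem volume_setOf_euclDist_le_ne_top (z : ℝ × ℝ) (r : ℝ) :
    volume {x | euclDist x z ≤ r} ≠ ∞ := by
  rw [volume_setOf_euclDist_le]
  exact ENNReal.mul_ne_top (ENNReal.pow_ne_top ENNReal.ofReal_ne_top) ENNReal.coe_ne_top

theorem toReal_volume_setOf_euclDist_le (z : ℝ × ℝ) {r : ℝ} (hr : 0 ≤ r) :
    (volume {x | euclDist x z ≤ r}).toReal = Real.pi * r ^ 2 := by
  rw [volume_setOf_euclDist_le, ENNReal.toReal_mul, ENNReal.toReal_pow, ENNReal.toReal_ofReal hr,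
    ENNReal.coe_toReal, NNReal.coe_real_pi, mul_comm]

theorem sq_sub_le_rpow_mul_div_euclDist_rpow (v : ℝ × ℝ → ℝ) {x y : ℝ × ℝ} {D t : ℝ}
    (ht : 0 ≤ t) (hxy : euclDist x y ≤ D) :
    (v x - v y) ^ 2 ≤ D ^ t * ((v x - v y) ^ 2 / euclDist x y ^ t) := by
  rcases (euclDist_nonneg x y).eq_or_lt with h0 | hpos
  -- On the diagonal both sides vanish, the kernel there being `0 / 0 ^ t`.
  · simp [eq_of_euclDist_eq_zero h0.symm]
  · have : 0 < euclDist x y ^ t := Real.rpow_pos_of_pos hpos t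
    calc (v x - v y) ^ 2 = euclDist x y ^ t * ((v x - v y) ^ 2 / euclDist x y ^ t) := by
          field_simp
      _ ≤ D ^ t * ((v x - v y) ^ 2 / euclDist x y ^ t) := by gcongr

theorem lintegral_enorm_sub_sq_le_gagliardoSq {s D : ℝ} (hs : -1 ≤ s) {K B : Set (ℝ × ℝ)}
    (hB : MeasurableSet B) (hKB : K ⊆ B) (hD : ∀ x ∈ B, ∀ y ∈ B, euclDist x y ≤ D)
    (u : ℝ × ℝ → ℝ) :
    ∫⁻ x in K, ∫⁻ y in B, ‖u y - u x‖ₑ ^ 2 ≤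
      ENNReal.ofReal (D ^ (2 * (1 + s))) * gagliardoSq s B u := by
  have hpointwise (x y : ℝ × ℝ) (hxy : euclDist x y ≤ D) : ‖u y - u x‖ₑ ^ 2 ≤
      ENNReal.ofReal (D ^ (2 * (1 + s))) *
        ENNReal.ofReal ((u x - u y) ^ 2 / euclDist x y ^ (2 * (1 + s))) := by
    rw [Real.enorm_eq_ofReal_abs, abs_sub_comm, ← ENNReal.ofReal_pow (abs_nonneg _), sq_abs,
      ← ENNReal.ofReal_mul' (div_nonneg (sq_nonneg _) (Real.rpow_nonneg (euclDist_nonneg x y) _))]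
    exact ENNReal.ofReal_le_ofReal
      (sq_sub_le_rpow_mul_div_euclDist_rpow u (by linarith) hxy)
  calc ∫⁻ x in K, ∫⁻ y in B, ‖u y - u x‖ₑ ^ 2
      ≤ ∫⁻ x in B, ∫⁻ y in B, ‖u y - u x‖ₑ ^ 2 :=
        lintegral_mono' (Measure.restrict_mono hKB le_rfl) le_rfl
    _ ≤ ∫⁻ x in B, ∫⁻ y in B, ENNReal.ofReal (D ^ (2 * (1 + s))) *
          ENNReal.ofReal ((u x - u y) ^ 2 / euclDist x y ^ (2 * (1 + s))) :=
        setLIntegral_mono' hB fun x hx =>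
          setLIntegral_mono' hB fun y hy => hpointwise x y (hD x hx y hy)
    _ = ENNReal.ofReal (D ^ (2 * (1 + s))) * gagliardoSq s B u := by
        simp only [lintegral_const_mul' _ _ ENNReal.ofReal_ne_top, gagliardoSq]

theorem short_edge_constant_bound {s c₁ h hₑ k : ℝ} (hs : s ≤ 1) (hh : 0 < h) (hk : 0 < k)
    (hₑ₀ : 0 ≤ hₑ) (hedge : hₑ * h ≤ c₁ * k) :
    hₑ * ((3 * h) ^ (2 * (1 + s)) / (k * (Real.pi * (3 * h / 2) ^ 2))) ≤
      (6 * √(c₁ / Real.pi) * h ^ (s - 1 / 2)) ^ 2 := by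
  have hc₁ : 0 ≤ c₁ := nonneg_of_mul_nonneg_left (by nlinarith) hk
  set p := (3 : ℝ) ^ s
  set q := h ^ s
  have hp : p ≤ 3 := by simpa using Real.rpow_le_rpow_of_exponent_le (by norm_num : (1 : ℝ) ≤ 3) hs
  have hp₀ : 0 < p := by positivity
  have hq₀ : 0 < q := by positivity
  have hlhs : (3 * h) ^ (2 * (1 + s)) = 9 * h ^ 2 * p ^ 2 * q ^ 2 := by
    rw [mul_comm 2, Real.rpow_mul (by positivity), Real.rpow_add (by positivity),
      Real.rpow_one, Real.mul_rpow (by norm_num) hh.le]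
    norm_cast
    ring
  have hrhs : (6 * √(c₁ / Real.pi) * h ^ (s - 1 / 2)) ^ 2 = 36 * (c₁ / Real.pi) * q ^ 2 / h := by
    rw [mul_pow, mul_pow, Real.sq_sqrt (by positivity), Real.rpow_sub hh, div_pow,
      ← Real.sqrt_eq_rpow, Real.sq_sqrt hh.le]
    ring
  have hratio : hₑ / k ≤ c₁ / h := (div_le_div_iff₀ hk hh).mpr (by linarith)
  rw [hlhs, hrhs]
  calc hₑ * (9 * h ^ 2 * p ^ 2 * q ^ 2 / (k * (Real.pi * (3 * h / 2) ^ 2)))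
      = 4 * p ^ 2 * (q ^ 2 / Real.pi) * (hₑ / k) := by field_simp; ring
    _ ≤ 36 * (q ^ 2 / Real.pi) * (c₁ / h) := by gcongr; nlinarith
    _ = 36 * (c₁ / Real.pi) * q ^ 2 / h := by ring

theorem sqrt_mul_abs_le_of_mul_sq_le {a x M Γ : ℝ} (ha : 0 ≤ a) (hM : 0 ≤ M)
    (h : a * x ^ 2 ≤ M ^ 2 * Γ) : √a * |x| ≤ M * √Γ := by
  rw [← Real.sqrt_sq (abs_nonneg x), ← Real.sqrt_mul ha, sq_abs, ← Real.sqrt_sq hM,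
    ← Real.sqrt_mul (sq_nonneg M)]
  exact Real.sqrt_le_sqrt h

theorem meanValue_eq_setAverage (D : Set (ℝ × ℝ)) (v : ℝ × ℝ → ℝ) :
    meanValue D v = ⨍ x in D, v x := by
  rw [meanValue, setAverage_eq, smul_eq_mul, measureReal_def, div_eq_inv_mul]

theorem sq_meanValue_sub_meanValue_le {s D : ℝ} (hs : -1 ≤ s) (hD : 0 ≤ D) {K B : Set (ℝ × ℝ)}
    (hB : MeasurableSet B) (hB_fin : volume B ≠ ∞) (hB_diam : ∀ x ∈ B, ∀ y ∈ B, euclDist x y ≤ D)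
    (hKB : K ⊆ B) (hK : volume K ≠ 0) {u : ℝ × ℝ → ℝ} (hu : IntegrableOn u B)
    (hu_fin : gagliardoSq s B u ≠ ∞) :
    (meanValue B u - meanValue K u) ^ 2 ≤
      D ^ (2 * (1 + s)) * (gagliardoSq s B u).toReal / ((volume K).toReal * (volume B).toReal) := by
  have hB₀ : volume B ≠ 0 := fun h => hK (measure_mono_null hKB h)
  have key := (enorm_setAverage_sub_setAverage_sq_le hKB hK hB_fin hu).trans
    (ENNReal.div_le_div_right (lintegral_enorm_sub_sq_le_gagliardoSq hs hB hKB hB_diam u) _)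
  have hfin : ENNReal.ofReal (D ^ (2 * (1 + s))) * gagliardoSq s B u / (volume K * volume B) ≠ ∞ :=
    (ENNReal.div_lt_top (ENNReal.mul_ne_top ENNReal.ofReal_ne_top hu_fin)
      (mul_ne_zero hK hB₀)).ne
  simpa [← meanValue_eq_setAverage, ENNReal.toReal_div, ENNReal.toReal_mul,
    ENNReal.toReal_ofReal (Real.rpow_nonneg hD _)] using ENNReal.toReal_mono hfin key

theorem short_edge_estimate_general (s : ℝ) (hs : s ∈ Set.Ioc (0 : ℝ) 1)
    (c₁ : ℝ) (hK : ℝ) (hhK : 0 < hK)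
    (z : ℝ × ℝ) (B : Set (ℝ × ℝ)) (hB : B = {x : ℝ × ℝ | euclDist x z ≤ 3 * hK / 2})
    (K : Set (ℝ × ℝ)) (hKB : K ⊆ B) (hKpos : 0 < volume K)
    (he : ℝ) (hhe : 0 < he) (hedge : he * hK ≤ c₁ * (volume K).toReal)
    (u : ℝ × ℝ → ℝ) (hu : MemLp u 2 (volume.restrict B))
    (hfin : gagliardoSq s B u < ⊤) :
    he ^ (1/2 : ℝ) * |meanValue B u - meanValue K u| ≤
      6 * Real.sqrt (c₁ / Real.pi) * hK ^ (s - 1/2) *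
        Real.sqrt (gagliardoSq s B u).toReal := by
  subst hB
  have hB_fin := volume_setOf_euclDist_le_ne_top z (3 * hK / 2)
  have hk : 0 < (volume K).toReal :=
    ENNReal.toReal_pos hKpos.ne' (ne_top_of_le_ne_top hB_fin (measure_mono hKB))
  have := isFiniteMeasure_restrict.mpr hB_fin
  have hmean := sq_meanValue_sub_meanValue_le (D := 3 * hK) (by linarith [hs.1]) (by positivity)
    (measurableSet_setOf_euclDist_le z _) hB_fin
    (fun x hx y hy => by linarith [euclDist_le_of_mem_closedBall hx hy]) hKB hKpos.ne'
    (hu.integrable one_le_two) hfin.ne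
  rw [toReal_volume_setOf_euclDist_le z (by positivity)] at hmean
  rw [← Real.sqrt_eq_rpow]
  refine sqrt_mul_abs_le_of_mul_sq_le hhe.le (by positivity) ?_
  calc he * (meanValue _ u - meanValue K u) ^ 2
      ≤ he * ((3 * hK) ^ (2 * (1 + s)) * (gagliardoSq s _ u).toReal /
          ((volume K).toReal * (Real.pi * (3 * hK / 2) ^ 2))) := by gcongr
    _ = he * ((3 * hK) ^ (2 * (1 + s)) / ((volume K).toReal * (Real.pi * (3 * hK / 2) ^ 2))) *
          (gagliardoSq s _ u).toReal := by ring
    _ ≤ _ := by gcongr; exact short_edge_constant_bound hs.2 hhK hk hhe.le hedge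

/-- Short-edge estimate (5.5) of the paper: if `B` is a closed Euclidean ball of
diameter `3h_K`, `K ⊆ B` has positive measure, and `h_e h_K ≤ c₁ |K|`, then for
`u ∈ L²(B)` with finite Gagliardo seminorm,
`h_e^{1/2} |ū_B − ū_K| ≤ 6 √(c₁/π) h_K^{s−1/2} |u|_{s,B}`. -/
theorem short_edge_estimate (s : ℝ) (hs : s ∈ Set.Ioc (0 : ℝ) 1)
    (c₁ : ℝ) (hc₁ : 0 < c₁) (hK : ℝ) (hhK : 0 < hK)
    (z : ℝ × ℝ) (B : Set (ℝ × ℝ)) (hB : B = {x : ℝ × ℝ | euclDist x z ≤ 3 * hK / 2})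
    (K : Set (ℝ × ℝ)) (hKmeas : MeasurableSet K) (hKB : K ⊆ B) (hKpos : 0 < volume K)
    (he : ℝ) (hhe : 0 < he) (hedge : he * hK ≤ c₁ * (volume K).toReal)
    (u : ℝ × ℝ → ℝ) (hu : MemLp u 2 (volume.restrict B))
    (hfin : gagliardoSq s B u < ⊤) :
    he ^ (1/2 : ℝ) * |meanValue B u - meanValue K u| ≤
      6 * Real.sqrt (c₁ / Real.pi) * hK ^ (s - 1/2) *
        Real.sqrt (gagliardoSq s B u).toReal :=
  short_edge_estimate_general s hs c₁ hK hhK z B hB K hKB hKpos he hhe hedge u hu hfin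
end
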